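/- arXiv:0909.4863 — 5 statements merged into one kernel-verified Lean document; each statement's English description precedes it below -/
import Mathlib

section
/- Let R be a commutative ring and E a nonzero R-module. Then R, viewed as a module over the trivial ring extension R⋉E via the projection map ε(r,e)=r, is never a projective R⋉E-module. -/
open CategoryTheory TrivSqZeroExt

noncomputable section

universe u

/-- The canonical projection `ε : R⋉E → R`, `ε (r, e) = r`. -/
def paperEps (R E : Type u) [CommRing R] [AddCommGroup E] [Module R E]
    [Module Rᵐᵒᵖ E] [IsCentralScalar R E] : TrivSqZeroExt R E →+* R :=
  (TrivSqZeroExt.fstHom R R E).toRingHom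

/-- If `B` is projective over `A` through a surjection `f : A →+* B`, then `A → B` splits
`A`-linearly; the image `u` of `1` under the splitting lifts `1` and is killed by `ker f`. -/
theorem RingHom.exists_lift_one_mul_ker_eq_zero {A B : Type*} [Semiring A] [Semiring B]
    (f : A →+* B) (hf : Function.Surjective f)
    (hproj : @Module.Projective A _ B _ (Module.compHom B f)) :
    ∃ u : A, f u = 1 ∧ ∀ a, f a = 0 → a * u = 0 := by
  let _ : Module A B := Module.compHom B f
  let π : A →ₗ[A] B :=
    { toFun := f
      map_add' := f.map_add
      map_smul' := f.map_mul }
  obtain ⟨s, hs⟩ := Module.projective_lifting_property π LinearMap.id hf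
  have hπs (b : B) : f (s b) = b := LinearMap.congr_fun hs b
  refine ⟨s 1, hπs 1, fun a ha => ?_⟩
  calc a * s 1 = s (a • 1) := (s.map_smul a 1).symm
    _ = 0 := by rw [show a • (1 : B) = f a * 1 from rfl, ha, zero_mul, map_zero]

theorem stmt0 (R E : Type u) [CommRing R] [AddCommGroup E] [Module R E]
    [Module Rᵐᵒᵖ E] [IsCentralScalar R E] (hE : Nontrivial E) :
    ¬ @Module.Projective (TrivSqZeroExt R E) _ R _ (Module.compHom R (paperEps R E)) := by
  intro hproj
  obtain ⟨u, hu, hker⟩ := (paperEps R E).exists_lift_one_mul_ker_eq_zero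
    (fun r => ⟨inl r, rfl⟩) hproj
  obtain ⟨e, he⟩ := exists_ne (0 : E)
  have hu' : u.fst = 1 := hu
  -- `(inr e * u).snd = u.fst • e = e`, while `inr e ∈ ker ε` forces `inr e * u = 0`.
  have : (inr e * u).snd = e := by simp [snd_mul, hu']
  rw [hker (inr e) rfl] at this
  exact he this.symm
end
end

section
/- Let R be a commutative ring and x ∈ R a nonzerodivisor. Then there is a short exact sequence of R⋉xR-modules 0 → R → R⋉xR → 0×xR → 0, where the first map is μ(r)=(0,xr) and the second is ν(r,xr')=(0,xr), with R regarded as an R⋉xR-module via ε(r,e)=r. -/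
open CategoryTheory TrivSqZeroExt

noncomputable section

universe u

/-
Since `(r, e) * inr e' = inr (r • e')`, for every `R`-linear map `f : R → E` the map `inr ∘ f` is
`R⋉E`-linear when `R` is an `R⋉E`-module through `ε`, and so is `inr ∘ f ∘ ε`. If `f` is bijective,
`inr ∘ f ∘ ε` vanishes exactly on `ker ε = 0×E`, which is the image of `inr ∘ f` and of
`inr ∘ f ∘ ε`. For `E = xR` with `x` a nonzerodivisor, `f r = x r` is bijective.
-/

namespace TrivSqZeroExt

section

variable {R E : Type u} [CommRing R] [AddCommGroup E] [Module R E] [Module Rᵐᵒᵖ E]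
  [IsCentralScalar R E]

abbrev moduleViaPaperEps : Module (TrivSqZeroExt R E) R :=
  Module.compHom R (paperEps R E)

attribute [local instance] moduleViaPaperEps

def fstLinear : TrivSqZeroExt R E →ₗ[TrivSqZeroExt R E] R where
  toFun := fst
  map_add' := fst_add
  map_smul' s p := fst_mul s p

theorem fstLinear_surjective : Function.Surjective (fstLinear : TrivSqZeroExt R E →ₗ[_] R) :=
  fun r => ⟨inl r, fst_inl E r⟩

def inrLinear (f : R →ₗ[R] E) : R →ₗ[TrivSqZeroExt R E] TrivSqZeroExt R E where
  toFun r := inr (f r)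
  map_add' a b := by rw [map_add, inr_add]
  map_smul' s r := by
    change inr (f (s.fst * r)) = s * inr (f r)
    rw [← smul_eq_mul s.fst r, map_smul]
    ext <;> simp

theorem inrLinear_injective {f : R →ₗ[R] E} (hf : Function.Injective f) :
    Function.Injective (inrLinear f) :=
  inr_injective.comp hf

theorem range_inrLinear {f : R →ₗ[R] E} (hf : Function.Surjective f) :
    Set.range (inrLinear f) = {p | p.fst = 0} := by
  ext p
  constructor
  · rintro ⟨r, rfl⟩
    exact fst_inr R (f r)
  · intro hp
    obtain ⟨r, hr⟩ := hf p.snd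
    exact ⟨r, ext hp.symm hr⟩

theorem range_inrLinear_comp_fstLinear {f : R →ₗ[R] E} (hf : Function.Surjective f) :
    Set.range (inrLinear f ∘ₗ fstLinear) = {p | p.fst = 0} := by
  rw [LinearMap.coe_comp, Set.range_comp, fstLinear_surjective.range_eq, Set.image_univ,
    range_inrLinear hf]

theorem exact_inrLinear_inrLinear_comp_fstLinear {f : R →ₗ[R] E} (hf : Function.Bijective f) :
    Function.Exact (inrLinear f) (inrLinear f ∘ₗ fstLinear) := by
  intro p
  rw [range_inrLinear hf.2]
  change inr (f p.fst) = 0 ↔ p.fst = 0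
  rw [← inr_zero, inr_injective.eq_iff, map_eq_zero_iff f hf.1]

end

end TrivSqZeroExt

def mulSpanSingleton {R : Type*} [CommRing R] (x : R) : R →ₗ[R] Ideal.span {x} :=
  (LinearMap.mulLeft R x).codRestrict _ fun r => Ideal.mem_span_singleton.mpr (dvd_mul_right x r)

theorem mulSpanSingleton_bijective {R : Type*} [CommRing R] {x : R} (hx : x ∈ nonZeroDivisors R) :
    Function.Bijective (mulSpanSingleton x) := by
  refine ⟨fun a b hab => ?_, fun ⟨e, he⟩ => ?_⟩
  · exact (mul_cancel_left_mem_nonZeroDivisors hx).mp (congrArg Subtype.val hab)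
  · obtain ⟨r, rfl⟩ := Ideal.mem_span_singleton.mp he
    exact ⟨r, rfl⟩

theorem stmt4 (R : Type u) [CommRing R] (x : R) (hx : x ∈ nonZeroDivisors R) :
    letI : Module (TrivSqZeroExt R (Ideal.span {x} : Ideal R)) R :=
      Module.compHom R (paperEps R (Ideal.span {x} : Ideal R))
    ∃ (μ : R →ₗ[TrivSqZeroExt R (Ideal.span {x} : Ideal R)]
          TrivSqZeroExt R (Ideal.span {x} : Ideal R))
      (ν : TrivSqZeroExt R (Ideal.span {x} : Ideal R) →ₗ[TrivSqZeroExt R (Ideal.span {x} : Ideal R)]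
          TrivSqZeroExt R (Ideal.span {x} : Ideal R)),
      (∀ r : R, μ r = TrivSqZeroExt.inr ⟨x * r, Ideal.mem_span_singleton.mpr (dvd_mul_right x r)⟩) ∧
      (∀ p : TrivSqZeroExt R (Ideal.span {x} : Ideal R),
        ν p = TrivSqZeroExt.inr ⟨x * TrivSqZeroExt.fst p,
          Ideal.mem_span_singleton.mpr (dvd_mul_right x _)⟩) ∧
      Function.Injective μ ∧ Function.Exact μ ν ∧
      Set.range ν = {p : TrivSqZeroExt R (Ideal.span {x} : Ideal R) | TrivSqZeroExt.fst p = 0} := by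
  have hf := mulSpanSingleton_bijective hx
  exact ⟨inrLinear (mulSpanSingleton x), inrLinear (mulSpanSingleton x) ∘ₗ fstLinear,
    fun _ => rfl, fun _ => rfl, inrLinear_injective hf.1,
    exact_inrLinear_inrLinear_comp_fstLinear hf, range_inrLinear_comp_fstLinear hf.2⟩
end
end

section
/- Let R be a commutative ring, E an R-module, and M an R-module. Then pd_R(M) ≤ pd_{R⋉E}(M), where M is an R⋉E-module via the ring surjection ε: R⋉E → R. -/
open CategoryTheory TrivSqZeroExt

noncomputable section

universe u

/-- `M` has a left resolution of length `≤ n` by modules satisfying `P`. -/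
def HasLeftResLE (R : Type u) [CommRing R] (P : ModuleCat.{u} R → Prop)
    (M : Type u) [AddCommGroup M] [Module R M] (n : ℕ) : Prop :=
  ∃ (G : ℕ → ModuleCat.{u} R) (d : ∀ i, G (i + 1) ⟶ G i) (aug : G 0 ⟶ ModuleCat.of R M),
    (∀ i, P (G i)) ∧ (∀ i, n < i → Subsingleton (G i)) ∧
    Function.Surjective aug ∧ Function.Exact (d 0) aug ∧
    ∀ i, Function.Exact (d (i + 1)) (d i)

/-- `M` has a right (co)resolution of length `≤ n` by modules satisfying `P`. -/
def HasRightResLE (R : Type u) [CommRing R] (P : ModuleCat.{u} R → Prop)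
    (M : Type u) [AddCommGroup M] [Module R M] (n : ℕ) : Prop :=
  ∃ (G : ℕ → ModuleCat.{u} R) (d : ∀ i, G i ⟶ G (i + 1)) (aug : ModuleCat.of R M ⟶ G 0),
    (∀ i, P (G i)) ∧ (∀ i, n < i → Subsingleton (G i)) ∧
    Function.Injective aug ∧ Function.Exact aug (d 0) ∧
    ∀ i, Function.Exact (d i) (d (i + 1))

/-- Projective dimension of `M` over `R`, as an element of `ℕ∞`. -/
def projDim (R : Type u) [CommRing R] (M : Type u) [AddCommGroup M] [Module R M] : ℕ∞ :=
  sInf ((fun n : ℕ => (n : ℕ∞)) '' {n : ℕ | HasLeftResLE R (fun N => Module.Projective R N) M n})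

/-- Flat dimension of `M` over `R`, as an element of `ℕ∞`. -/
def flatDim (R : Type u) [CommRing R] (M : Type u) [AddCommGroup M] [Module R M] : ℕ∞ :=
  sInf ((fun n : ℕ => (n : ℕ∞)) '' {n : ℕ | HasLeftResLE R (fun N => Module.Flat R N) M n})

/-- Injective dimension of `M` over `R`, as an element of `ℕ∞`. -/
def injDim (R : Type u) [CommRing R] (M : Type u) [AddCommGroup M] [Module R M] : ℕ∞ :=
  sInf ((fun n : ℕ => (n : ℕ∞)) '' {n : ℕ | HasRightResLE R (fun N => Module.Injective R N) M n})

/-! Write `S = R ⋉ E`, `σ : R → S` for the inclusion, so that `ε ∘ σ = id`. Call an `R`-module `M` a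
stable retract of an `S`-module `N` if there are an `S`-linear `f : N → M` and an `R`-linear
`g : M → N` with `id - f ∘ g` factoring through a projective `R`-module; `M` is one of itself, with
`f = g = id`. If `N` is projective, lifting `f` to a free cover `F → M` makes `M` a summand of
`F ⊕ Q`. Otherwise lift `f` and `g` to `φ : P → F` and `ψ : F → P` along a projective cover `P → N`
and the free cover `F → M`: they restrict to maps of syzygies making `ker (F → M)` a stable retract
of `ker (P → N)`, now with the defect `id - φ ∘ ψ` factoring through `F`. Induction on the length of
a projective resolution of `N` then gives `pd_R M ≤ pd_S N`. -/

section Resolutions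

variable {T : Type u} [CommRing T]

theorem hasLeftResLE_zero_of_projective {X : Type u} [AddCommGroup X] [Module T X]
    (hX : Module.Projective T X) : HasLeftResLE T (fun N => Module.Projective T N) X 0 := by
  refine ⟨fun | 0 => ModuleCat.of T X | _ + 1 => ModuleCat.of T PUnit, fun _ => 0,
    𝟙 (ModuleCat.of T X), fun | 0 => hX | _ + 1 => inferInstance,
    fun | _ + 1, _ => inferInstanceAs (Subsingleton PUnit), Function.surjective_id,
    fun y => ?_, fun i y => ?_⟩
  · simp [eq_comm]
  · obtain rfl : y = 0 := Subsingleton.elim (α := PUnit) _ _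
    simp

theorem HasLeftResLE.projective_of_zero {X : Type u} [AddCommGroup X] [Module T X]
    (h : HasLeftResLE T (fun N => Module.Projective T N) X 0) : Module.Projective T X := by
  obtain ⟨G, d, aug, hG, hG1, haug, hexact, -⟩ := h
  have : Subsingleton (G 1) := hG1 1 one_pos
  have : Module.Projective T (G 0) := hG 0
  have hinj : Function.Injective aug := by
    refine (injective_iff_map_eq_zero _).2 fun x hx => ?_
    obtain ⟨y, rfl⟩ := (hexact x).1 hx
    rw [Subsingleton.elim y 0, map_zero]
  exact .of_equiv' (LinearEquiv.ofBijective aug.hom ⟨hinj, haug⟩)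

theorem HasLeftResLE.succ_of_exact {P : ModuleCat.{u} T → Prop}
    {X X' F : Type u} [AddCommGroup X] [Module T X] [AddCommGroup X'] [Module T X']
    [AddCommGroup F] [Module T F] (hF : P (ModuleCat.of T F))
    (ι : X' →ₗ[T] F) (π : F →ₗ[T] X) (hι : Function.Injective ι) (hπ : Function.Surjective π)
    (hιπ : Function.Exact ι π) {n : ℕ} (h : HasLeftResLE T P X' n) :
    HasLeftResLE T P X (n + 1) := by
  obtain ⟨G, d, aug, hG, hGn, haug, hexact0, hexact⟩ := h
  refine ⟨fun | 0 => ModuleCat.of T F | i + 1 => G i,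
    fun | 0 => ModuleCat.ofHom (ι ∘ₗ aug.hom) | i + 1 => d i,
    ModuleCat.ofHom π, fun | 0 => hF | i + 1 => hG i,
    fun | i + 1, hi => hGn i (by omega), hπ, ?_, fun | 0 => ?_ | i + 1 => hexact i⟩
  · intro y
    refine (hιπ y).trans ⟨fun ⟨x, hx⟩ => (haug x).imp fun z hz => by simp [← hx, ← hz],
      fun ⟨z, hz⟩ => ⟨aug z, hz⟩⟩
  · intro y
    change ι (aug y) = 0 ↔ _
    rw [map_eq_zero_iff ι hι]
    exact hexact0 y

theorem HasLeftResLE.exists_ker {P : ModuleCat.{u} T → Prop} {X : Type u} [AddCommGroup X]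
    [Module T X] {n : ℕ} (h : HasLeftResLE T P X (n + 1)) :
    ∃ (F : ModuleCat.{u} T) (π : F →ₗ[T] X), P F ∧ Function.Surjective π ∧
      HasLeftResLE T P (LinearMap.ker π) n := by
  obtain ⟨G, d, aug, hG, hGn, haug, hexact0, hexact⟩ := h
  have hd : ∀ x, aug.hom (d 0 x) = 0 := fun x => (hexact0 _).2 ⟨x, rfl⟩
  refine ⟨G 0, aug.hom, hG 0, haug, fun i => G (i + 1), fun i => d (i + 1),
    ModuleCat.ofHom ((d 0).hom.codRestrict _ hd), fun i => hG (i + 1),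
    fun i hi => hGn (i + 1) (by omega), ?_, ?_, fun i => hexact (i + 1)⟩
  · rintro ⟨y, hy⟩
    obtain ⟨x, rfl⟩ := (hexact0 y).1 hy
    exact ⟨x, rfl⟩
  · intro y
    rw [← hexact 0 y]
    exact Subtype.ext_iff

end Resolutions

theorem Module.Projective.exists_semilinear_lift {S R : Type*} [Semiring S] [Semiring R]
    {ε : S →+* R} {P F M : Type*} [AddCommMonoid P] [Module S P] [Module.Projective S P]
    [AddCommMonoid F] [Module R F] [AddCommMonoid M] [Module R M]
    (q : F →ₗ[R] M) (hq : Function.Surjective q) (f : P →ₛₗ[ε] M) :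
    ∃ φ : P →ₛₗ[ε] F, ∀ p, q (φ p) = f p := by
  let := Module.compHom F ε
  let := Module.compHom M ε
  let qS : F →ₗ[S] M := ⟨q.toAddHom, fun c => q.map_smul (ε c)⟩
  let fS : P →ₗ[S] M := ⟨f.toAddHom, f.map_smulₛₗ⟩
  obtain ⟨φ, hφ⟩ := projective_lifting_property qS fS hq
  exact ⟨⟨φ.toAddHom, φ.map_smul⟩, LinearMap.congr_fun hφ⟩

section StableRetract

variable {R S : Type u} [CommRing R] [CommRing S] {σ : R →+* S} {ε : S →+* R}
  [RingHomCompTriple σ ε (RingHom.id R)]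
variable {N : Type u} [AddCommGroup N] [Module S N] {M : Type u} [AddCommGroup M] [Module R M]
variable {Q : Type u} [AddCommGroup Q] [Module R Q] [Module.Projective R Q]

theorem Module.Projective.of_stable_retract [Module.Projective S N] (f : N →ₛₗ[ε] M)
    (g : M →ₛₗ[σ] N) (a : M →ₗ[R] Q) (b : Q →ₗ[R] M) (hfg : ∀ x, f (g x) + b (a x) = x) :
    Module.Projective R M := by
  let q := Finsupp.linearCombination R (id : M → M)
  obtain ⟨φ, hφ⟩ := Module.Projective.exists_semilinear_lift q
    (Finsupp.linearCombination_id_surjective R M) f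
  refine .of_split ((φ.comp g).prod a) (q.coprod b) (LinearMap.ext fun x => ?_)
  simp [hφ, hfg]

theorem exists_stable_retract_ker {P : Type u} [AddCommGroup P] [Module S P]
    [Module.Projective S P] (π : P →ₗ[S] N) (hπ : Function.Surjective π) (f : N →ₛₗ[ε] M)
    (g : M →ₛₗ[σ] N) (a : M →ₗ[R] Q) (b : Q →ₗ[R] M) (hfg : ∀ x, f (g x) + b (a x) = x)
    {F : Type u} [AddCommGroup F] [Module R F] [Module.Projective R F] (q : F →ₗ[R] M)
    (hq : Function.Surjective q) :
    ∃ (f' : LinearMap.ker π →ₛₗ[ε] LinearMap.ker q) (g' : LinearMap.ker q →ₛₗ[σ] LinearMap.ker π)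
      (b' : F →ₗ[R] LinearMap.ker q), ∀ x, f' (g' x) + b' x = x := by
  obtain ⟨φ, hφ⟩ := Module.Projective.exists_semilinear_lift q hq (f.comp π)
  obtain ⟨ψ, hψ⟩ := Module.Projective.exists_semilinear_lift π hπ (g.comp q)
  obtain ⟨β, hβ⟩ := Module.projective_lifting_property q b hq
  replace hβ : ∀ y, q (β y) = b y := LinearMap.congr_fun hβ
  have hφ' : ∀ x : LinearMap.ker π, φ x ∈ LinearMap.ker q := fun x => by simp [hφ]
  have hψ' : ∀ x : LinearMap.ker q, ψ x ∈ LinearMap.ker π := fun x => by simp [hψ]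
  have he : ∀ x : F, x - φ (ψ x) - β (a (q x)) ∈ LinearMap.ker q := fun x => by
    simp [hφ, hψ, hβ, sub_sub, hfg]
  refine ⟨(φ.comp (LinearMap.ker π).subtype).codRestrict _ hφ',
    (ψ.comp (LinearMap.ker q).subtype).codRestrict _ hψ',
    (LinearMap.id - φ.comp ψ - β ∘ₗ a ∘ₗ q).codRestrict _ he, fun x => ?_⟩
  have hx : q x = 0 := x.2
  apply Subtype.ext
  change φ (ψ x) + (x - φ (ψ x) - β (a (q x))) = x
  rw [hx, map_zero, map_zero]
  abel

theorem hasLeftResLE_of_stable_retract (n : ℕ)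
    (hN : HasLeftResLE S (fun X => Module.Projective S X) N n)
    (f : N →ₛₗ[ε] M) (g : M →ₛₗ[σ] N) (a : M →ₗ[R] Q) (b : Q →ₗ[R] M)
    (hfg : ∀ x, f (g x) + b (a x) = x) :
    HasLeftResLE R (fun X => Module.Projective R X) M n := by
  induction n generalizing N M Q with
  | zero =>
    have := hN.projective_of_zero
    exact hasLeftResLE_zero_of_projective (.of_stable_retract f g a b hfg)
  | succ n ih =>
    obtain ⟨P, π, hP, hπ, hker⟩ := hN.exists_ker
    let q := Finsupp.linearCombination R (id : M → M)
    have hq : Function.Surjective q := Finsupp.linearCombination_id_surjective R M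
    obtain ⟨f', g', b', hfg'⟩ := exists_stable_retract_ker (P := P) π hπ f g a b hfg q hq
    have hresq : HasLeftResLE R _ (LinearMap.ker q) n :=
      ih hker f' g' (LinearMap.ker q).subtype b' hfg'
    exact .succ_of_exact (P := fun X => Module.Projective R X) (F := M →₀ R) inferInstance
      (LinearMap.ker q).subtype q Subtype.val_injective hq q.exact_subtype_ker_map hresq

end StableRetract

theorem projDim_le_projDim_compHom {R S : Type u} [CommRing R] [CommRing S] (σ : R →+* S)
    {ε : S →+* R} [RingHomCompTriple σ ε (RingHom.id R)]
    (M : Type u) [AddCommGroup M] [Module R M] :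
    projDim R M ≤ @projDim S _ M _ (Module.compHom M ε) := by
  let := Module.compHom M ε
  let f : M →ₛₗ[ε] M := ⟨AddHom.id M, fun _ _ => rfl⟩
  let g : M →ₛₗ[σ] M := ⟨AddHom.id M, fun r x => by
    change r • x = ε (σ r) • x
    rw [RingHomCompTriple.comp_apply]
    rfl⟩
  refine sInf_le_sInf ?_
  rintro _ ⟨n, hn, rfl⟩
  exact ⟨n, hasLeftResLE_of_stable_retract (Q := R) n hn f g 0 0 fun _ => by simp [f, g], rfl⟩

theorem stmt8 (R E : Type u) [CommRing R] [AddCommGroup E] [Module R E]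
    [Module Rᵐᵒᵖ E] [IsCentralScalar R E]
    (M : Type u) [AddCommGroup M] [Module R M] :
    projDim R M ≤ @projDim (TrivSqZeroExt R E) _ M _ (Module.compHom M (paperEps R E)) :=
  have : RingHomCompTriple (inlHom R E) (paperEps R E) (RingHom.id R) := ⟨rfl⟩
  projDim_le_projDim_compHom (inlHom R E) M
end
end

section
/- Let R be a commutative ring and E an R-module such that R has finite projective dimension as an R⋉E-module. If M is a Gorenstein projective R⋉E-module, then M ⊗_{R⋉E} R is a Gorenstein projective R-module. -/
open CategoryTheory TrivSqZeroExt

noncomputable section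

universe u

/-- `M` is Gorenstein projective over `R`: it is a syzygy of a complete projective
resolution, i.e. an exact complex of projectives which stays exact under
`Hom(-, Q)` for every projective `Q`. -/
def IsGorensteinProjective (R : Type u) [CommRing R]
    (M : Type u) [AddCommGroup M] [Module R M] : Prop :=
  ∃ (P : ℤ → ModuleCat.{u} R) (d : ∀ i : ℤ, P (i + 1) ⟶ P i),
    (∀ i, Module.Projective R (P i)) ∧
    (∀ i, Function.Exact (d (i + 1)) (d i)) ∧
    (∀ Q : ModuleCat.{u} R, Module.Projective R Q →
      ∀ i : ℤ, Function.Exact (LinearMap.lcomp R Q (d i).hom) (LinearMap.lcomp R Q (d (i + 1)).hom)) ∧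
    Nonempty (M ≃ₗ[R] LinearMap.range (d 0).hom)

/-- Gorenstein projective dimension of `M` over `R`, as an element of `ℕ∞`. -/
def gprojDim (R : Type u) [CommRing R] (M : Type u) [AddCommGroup M] [Module R M] : ℕ∞ :=
  sInf ((fun n : ℕ => (n : ℕ∞)) '' {n : ℕ | HasLeftResLE R (fun N => IsGorensteinProjective R N) M n})

/-- Gorenstein global dimension of `R`: the supremum of the Gorenstein projective
dimensions of all `R`-modules. -/
def Ggldim (R : Type u) [CommRing R] : ℕ∞ :=
  ⨆ M : ModuleCat.{u} R, gprojDim R M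

/-!
Call an `A`-module `N` tensor-Hom exact for a complete projective resolution `P` if both
`N ⊗ P` and `Hom(P, N)` are exact. Projective modules are, and the property passes to retracts
and to cokernels of monomorphisms, so every module of finite projective dimension has it: in
particular `R`, and every projective `R`-module, being a retract of a free `R`-module. Hence
`R ⊗_A P` is an exact complex of projective `R`-modules, `Hom_R(R ⊗_A P, Q) ≅ Hom_A(P, Q)` is
exact for projective `Q`, and exactness of `R ⊗_A P` identifies `R ⊗_A M` with the image of
its differential.
-/

open Function TensorProduct

section Exactness

variable {A : Type*} [Ring A]

lemma Function.Exact.of_retract {X₁ X₂ X₃ Y₁ Y₂ Y₃ : Type*}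
    [AddCommGroup X₁] [AddCommGroup X₂] [AddCommGroup X₃]
    [AddCommGroup Y₁] [AddCommGroup Y₂] [AddCommGroup Y₃]
    [Module A X₁] [Module A X₂] [Module A X₃] [Module A Y₁] [Module A Y₂] [Module A Y₃]
    {f : X₁ →ₗ[A] X₂} {g : X₂ →ₗ[A] X₃} {f' : Y₁ →ₗ[A] Y₂} {g' : Y₂ →ₗ[A] Y₃}
    (hex : Exact f' g')
    (s₁ : X₁ →ₗ[A] Y₁) (s₂ : X₂ →ₗ[A] Y₂) (s₃ : X₃ →ₗ[A] Y₃)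
    (r₁ : Y₁ →ₗ[A] X₁) (r₂ : Y₂ →ₗ[A] X₂)
    (hrs₂ : ∀ x, r₂ (s₂ x) = x) (hs₃ : Injective s₃)
    (hsf : ∀ x, f' (s₁ x) = s₂ (f x)) (hsg : ∀ x, g' (s₂ x) = s₃ (g x))
    (hrf : ∀ y, r₂ (f' y) = f (r₁ y)) : Exact f g := by
  intro x
  constructor
  · intro hx
    obtain ⟨y, hy⟩ := (hex (s₂ x)).mp (by rw [hsg, hx, map_zero])
    exact ⟨r₁ y, by rw [← hrf, hy, hrs₂]⟩
  · rintro ⟨x, rfl⟩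
    apply hs₃
    rw [map_zero, ← hsg, ← hsf]
    exact hex.apply_apply_eq_zero (s₁ x)

/-- Given a short exact sequence of complexes `0 → X → Y → Z → 0` (drawn at the levels
`m ← 0 ← 1 ← 2`), exactness of `X` at `0` and of `Y` at `1` gives exactness of `Z` at `1`. -/
lemma Function.Exact.of_shortExact_complexes {Xm X₀ X₁ Ym Y₀ Y₁ Y₂ Z₀ Z₁ Z₂ : Type*}
    [AddCommGroup Xm] [AddCommGroup X₀] [AddCommGroup X₁]
    [AddCommGroup Ym] [AddCommGroup Y₀] [AddCommGroup Y₁] [AddCommGroup Y₂]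
    [AddCommGroup Z₀] [AddCommGroup Z₁] [AddCommGroup Z₂]
    [Module A Xm] [Module A X₀] [Module A X₁]
    [Module A Ym] [Module A Y₀] [Module A Y₁] [Module A Y₂]
    [Module A Z₀] [Module A Z₁] [Module A Z₂]
    {dX₀ : X₁ →ₗ[A] X₀} {dXm : X₀ →ₗ[A] Xm}
    {dY₁ : Y₂ →ₗ[A] Y₁} {dY₀ : Y₁ →ₗ[A] Y₀} {dYm : Y₀ →ₗ[A] Ym}
    (dZ₁ : Z₂ →ₗ[A] Z₁) (dZ₀ : Z₁ →ₗ[A] Z₀)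
    {jm : Xm →ₗ[A] Ym} {j₀ : X₀ →ₗ[A] Y₀} (j₁ : X₁ →ₗ[A] Y₁)
    {p₀ : Y₀ →ₗ[A] Z₀} {p₁ : Y₁ →ₗ[A] Z₁} {p₂ : Y₂ →ₗ[A] Z₂}
    (hX : Exact dX₀ dXm) (hY : Exact dY₁ dY₀) (hY₀ : ∀ y, dYm (dY₀ y) = 0)
    (hjm : Injective jm) (hjp₀ : Exact j₀ p₀) (hjp₁ : ∀ x, p₁ (j₁ x) = 0)
    (hp₁ : Surjective p₁) (hp₂ : Surjective p₂)
    (hjm_comm : ∀ x, dYm (j₀ x) = jm (dXm x)) (hj₀_comm : ∀ x, dY₀ (j₁ x) = j₀ (dX₀ x))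
    (hp₀_comm : ∀ y, dZ₀ (p₁ y) = p₀ (dY₀ y)) (hp₁_comm : ∀ y, dZ₁ (p₂ y) = p₁ (dY₁ y)) :
    Exact dZ₁ dZ₀ := by
  intro z
  constructor
  · intro hz
    obtain ⟨y, rfl⟩ := hp₁ z
    obtain ⟨x, hx⟩ := (hjp₀ (dY₀ y)).mp (by rw [← hp₀_comm, hz])
    have hdx : dXm x = 0 := hjm (by rw [← hjm_comm, hx, hY₀, map_zero])
    obtain ⟨x', hx'⟩ := (hX x).mp hdx
    obtain ⟨y', hy'⟩ := (hY (y - j₁ x')).mp (by rw [map_sub, hj₀_comm, hx', hx, sub_self])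
    exact ⟨p₂ y', by rw [hp₁_comm, hy', map_sub, hjp₁, sub_zero]⟩
  · rintro ⟨z', rfl⟩
    obtain ⟨y, rfl⟩ := hp₂ z'
    rw [hp₁_comm, hp₀_comm, hY.apply_apply_eq_zero, map_zero]

end Exactness

section Resolutions

variable {A : Type u} [CommRing A] {Pr : ModuleCat.{u} A → Prop}
  {N : Type u} [AddCommGroup N] [Module A N]

lemma HasLeftResLE.exists_linearEquiv_of_zero (h : HasLeftResLE A Pr N 0) :
    ∃ F : ModuleCat.{u} A, Pr F ∧ Nonempty (F ≃ₗ[A] N) := by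
  obtain ⟨G, d, aug, hG, hzero, hsurj, hex₀, -⟩ := h
  have : Subsingleton (G 1) := hzero 1 zero_lt_one
  have hinj : Injective aug := by
    rw [← LinearMap.ker_eq_bot, LinearMap.ker_eq_bot']
    intro x hx
    obtain ⟨y, rfl⟩ := (hex₀ x).mp hx
    rw [Subsingleton.elim y 0, map_zero]
  exact ⟨G 0, hG 0, ⟨LinearEquiv.ofBijective aug.hom ⟨hinj, hsurj⟩⟩⟩

lemma HasLeftResLE.exists_surjective_of_succ {n : ℕ} (h : HasLeftResLE A Pr N (n + 1)) :
    ∃ (F : ModuleCat.{u} A) (p : F →ₗ[A] N),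
      Pr F ∧ Surjective p ∧ HasLeftResLE A Pr (LinearMap.ker p) n := by
  obtain ⟨G, d, aug, hG, hzero, hsurj, hex₀, hex⟩ := h
  have hrange : ∀ x, d 0 x ∈ LinearMap.ker aug.hom := fun x => hex₀.apply_apply_eq_zero x
  refine ⟨G 0, aug.hom, hG 0, hsurj, fun i => G (i + 1), fun i => d (i + 1),
    ModuleCat.ofHom ((d 0).hom.codRestrict _ hrange), fun i => hG (i + 1),
    fun i hi => hzero (i + 1) (by omega), ?_, ?_, fun i => hex (i + 1)⟩
  · rintro ⟨x, hx⟩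
    obtain ⟨y, hy⟩ := (hex₀ x).mp hx
    exact ⟨y, Subtype.ext hy⟩
  · intro x
    rw [← hex 0 x]
    exact Subtype.ext_iff.trans (by rfl)

lemma exists_hasLeftResLE_of_projDim_ne_top (h : projDim A N ≠ ⊤) :
    ∃ n : ℕ, HasLeftResLE A (fun G => Module.Projective A G) N n := by
  by_contra! hc
  exact h (by simp only [projDim, hc, Set.ofPred_false, Set.image_empty, sInf_empty])

lemma DFinsupp.exact_mapRange_linearMap {ι : Type*} {R X Y Z : Type*} [Semiring R]
    [AddCommMonoid X] [AddCommMonoid Y] [AddCommMonoid Z] [Module R X] [Module R Y] [Module R Z]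
    {f : X →ₗ[R] Y} {g : Y →ₗ[R] Z} (h : Exact f g) :
    Exact (DFinsupp.mapRange.linearMap fun _ : ι => f)
      (DFinsupp.mapRange.linearMap fun _ : ι => g) := by
  rw [LinearMap.exact_iff, DFinsupp.ker_mapRangeLinearMap, DFinsupp.range_mapRangeLinearMap,
    h.linearMap_ker_eq]

lemma HasLeftResLE.dfinsupp_projective (ι : Type u) {n : ℕ}
    (h : HasLeftResLE A (fun G => Module.Projective A G) N n) :
    HasLeftResLE A (fun G => Module.Projective A G) (Π₀ _ : ι, N) n := by
  obtain ⟨G, d, aug, hG, hzero, hsurj, hex₀, hex⟩ := h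
  refine ⟨fun i => ModuleCat.of A (Π₀ _ : ι, G i),
    fun i => ModuleCat.ofHom (DFinsupp.mapRange.linearMap fun _ => (d i).hom),
    ModuleCat.ofHom (DFinsupp.mapRange.linearMap fun _ => aug.hom),
    fun i => ?_, fun i hi => ?_,
    (DFinsupp.mapRange_surjective _ fun _ => map_zero _).mpr fun _ => hsurj,
    DFinsupp.exact_mapRange_linearMap hex₀, fun i => DFinsupp.exact_mapRange_linearMap (hex i)⟩
  · have := hG i
    exact inferInstanceAs (Module.Projective A (Π₀ _ : ι, G i))
  · have := hzero i hi
    exact inferInstanceAs (Subsingleton (Π₀ _ : ι, G i))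

end Resolutions

section CompleteResolution

open LinearMap

lemma LinearMap.lTensor_rTensor_comm_apply {R M M' X Y : Type*} [CommRing R]
    [AddCommGroup M] [AddCommGroup M'] [AddCommGroup X] [AddCommGroup Y]
    [Module R M] [Module R M'] [Module R X] [Module R Y]
    (t : M →ₗ[R] M') (g : X →ₗ[R] Y) (x : M ⊗[R] X) :
    lTensor M' g (rTensor X t x) = rTensor Y t (lTensor M g x) :=
  congr($(lTensor_comp_rTensor (f := t) (g := g)) x).trans
    congr($(rTensor_comp_lTensor (f := t) (g := g)) x).symm

variable {A : Type u} [CommRing A] (P : ℤ → ModuleCat.{u} A) (d : ∀ i : ℤ, P (i + 1) ⟶ P i)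

def IsTensorHomExact (N : Type u) [AddCommGroup N] [Module A N] : Prop :=
  (∀ i : ℤ, Exact (lTensor N (d (i + 1)).hom) (lTensor N (d i).hom)) ∧
  (∀ i : ℤ, Exact (lcomp A N (d i).hom) (lcomp A N (d (i + 1)).hom))

structure IsCompleteProjectiveResolution : Prop where
  projective : ∀ i, Module.Projective A (P i)
  exact : ∀ i, Exact (d (i + 1)) (d i)
  exact_lcomp : ∀ Q : ModuleCat.{u} A, Module.Projective A Q →
    ∀ i : ℤ, Exact (lcomp A Q (d i).hom) (lcomp A Q (d (i + 1)).hom)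

variable {P d}

lemma IsCompleteProjectiveResolution.isTensorHomExact_of_projective
    (hP : IsCompleteProjectiveResolution P d)
    {N : Type u} [AddCommGroup N] [Module A N] (hN : Module.Projective A N) :
    IsTensorHomExact P d N :=
  ⟨fun i => Module.Flat.lTensor_exact N (hP.exact i),
    fun i => hP.exact_lcomp (ModuleCat.of A N) hN i⟩

lemma IsTensorHomExact.of_retract {N N' : Type u} [AddCommGroup N] [Module A N]
    [AddCommGroup N'] [Module A N'] (hN : IsTensorHomExact P d N)
    (s : N' →ₗ[A] N) (r : N →ₗ[A] N') (hrs : r ∘ₗ s = LinearMap.id) :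
    IsTensorHomExact P d N' := by
  have hrsT (X : Type u) [AddCommGroup X] [Module A X] (x : N' ⊗[A] X) :
      rTensor X r (rTensor X s x) = x := by
    rw [← LinearMap.comp_apply, ← rTensor_comp, hrs, rTensor_id, LinearMap.id_apply]
  have hrsH (X : Type u) [AddCommGroup X] [Module A X] (f : X →ₗ[A] N') :
      compRight A r (compRight A s f) = f := by
    ext x; exact congr($hrs (f x))
  refine ⟨fun i => (hN.1 i).of_retract (rTensor _ s) (rTensor _ s) (rTensor _ s)
      (rTensor _ r) (rTensor _ r) (hrsT _) (LeftInverse.injective (hrsT _))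
      (lTensor_rTensor_comm_apply _ _) (lTensor_rTensor_comm_apply _ _)
      (fun y => (lTensor_rTensor_comm_apply _ _ y).symm),
    fun i => (hN.2 i).of_retract (compRight A s) (compRight A s) (compRight A s)
      (compRight A r) (compRight A r) (hrsH _) (LeftInverse.injective (hrsH _))
      (fun _ => rfl) (fun _ => rfl) (fun _ => rfl)⟩

lemma IsTensorHomExact.of_linearEquiv {N N' : Type u} [AddCommGroup N] [Module A N]
    [AddCommGroup N'] [Module A N'] (hN : IsTensorHomExact P d N) (e : N ≃ₗ[A] N') :
    IsTensorHomExact P d N' :=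
  hN.of_retract e.symm.toLinearMap e.toLinearMap (by ext; simp)

lemma exact_compRight_of_exact_of_injective {X K F N : Type*} [AddCommGroup X] [Module A X]
    [AddCommGroup K] [Module A K] [AddCommGroup F] [Module A F] [AddCommGroup N] [Module A N]
    {ι : K →ₗ[A] F} {p : F →ₗ[A] N} (hex : Exact ι p) (hι : Injective ι) :
    Exact (compRight (M := X) A ι) (compRight (M := X) A p) := by
  intro f
  constructor
  · intro hf
    have hmem : ∀ x, f x ∈ range ι := fun x => (hex (f x)).mp congr($hf x)
    refine ⟨(LinearEquiv.ofInjective ι hι).symm.toLinearMap ∘ₗ f.codRestrict _ hmem, ?_⟩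
    ext x
    simp
  · rintro ⟨g, rfl⟩
    ext x
    exact hex.apply_apply_eq_zero (g x)

lemma IsTensorHomExact.of_shortExact (hproj : ∀ i, Module.Projective A (P i))
    {K F N : Type u} [AddCommGroup K] [Module A K] [AddCommGroup F] [Module A F]
    [AddCommGroup N] [Module A N] (hK : IsTensorHomExact P d K) (hF : IsTensorHomExact P d F)
    {ι : K →ₗ[A] F} {p : F →ₗ[A] N} (hι : Injective ι) (hp : Surjective p) (hex : Exact ι p) :
    IsTensorHomExact P d N := by
  have hpι : p ∘ₗ ι = 0 := hex.linearMap_comp_eq_zero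
  refine ⟨fun i => ?_, fun i => ?_⟩
  · obtain ⟨m, rfl⟩ : ∃ m : ℤ, i = m + 1 := ⟨i - 1, by ring⟩
    have hinj : Injective (rTensor (P m) ι) :=
      Module.Flat.rTensor_preserves_injective_linearMap ι hι
    have hzero (x : K ⊗[A] P (m + 1 + 1)) : rTensor _ p (rTensor _ ι x) = 0 := by
      rw [← LinearMap.comp_apply, ← rTensor_comp, hpι, rTensor_zero, LinearMap.zero_apply]
    exact Exact.of_shortExact_complexes _ _ (rTensor _ ι) (hK.1 m) (hF.1 (m + 1))
      (hF.1 m).apply_apply_eq_zero hinj (rTensor_exact _ hex hp) hzero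
      (rTensor_surjective _ hp) (rTensor_surjective _ hp)
      (lTensor_rTensor_comm_apply ι (d m).hom) (lTensor_rTensor_comm_apply ι (d (m + 1)).hom)
      (lTensor_rTensor_comm_apply p (d (m + 1)).hom)
      (lTensor_rTensor_comm_apply p (d (m + 1 + 1)).hom)
  · have hlift (j : ℤ) : Surjective (compRight (M := P j) A p) :=
      fun g => Module.projective_lifting_property p g hp
    exact Exact.of_shortExact_complexes _ _ (compRight A ι) (hK.2 (i + 1)) (hF.2 i)
      (hF.2 (i + 1)).apply_apply_eq_zero
      (jm := compRight A ι) (fun f g h => ext fun x => hι (LinearMap.congr_fun h x))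
      (exact_compRight_of_exact_of_injective hex hι)
      (fun f => ext fun x => hex.apply_apply_eq_zero (f x))
      (hlift _) (hlift _) (fun _ => rfl) (fun _ => rfl) (fun _ => rfl) (fun _ => rfl)

lemma IsCompleteProjectiveResolution.isTensorHomExact_of_hasLeftResLE
    (hP : IsCompleteProjectiveResolution P d) {N : Type u} [AddCommGroup N] [Module A N] {n : ℕ}
    (hN : HasLeftResLE A (fun G => Module.Projective A G) N n) : IsTensorHomExact P d N := by
  induction n generalizing N with
  | zero =>
    obtain ⟨F, hF, ⟨e⟩⟩ := hN.exists_linearEquiv_of_zero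
    exact (hP.isTensorHomExact_of_projective hF).of_linearEquiv e
  | succ n ih =>
    obtain ⟨F, p, hF, hp, hK⟩ := hN.exists_surjective_of_succ
    exact (ih hK).of_shortExact hP.projective (hP.isTensorHomExact_of_projective hF)
      (ker p).injective_subtype hp (exact_subtype_ker_map p)

end CompleteResolution

section BaseChange

open LinearMap

variable {A : Type u} [CommRing A] (R : Type u) [CommRing R] [Algebra A R]

lemma Function.Exact.lcomp_baseChange {X Y Z Q : Type u} [AddCommGroup X] [Module A X]
    [AddCommGroup Y] [Module A Y] [AddCommGroup Z] [Module A Z]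
    [AddCommGroup Q] [Module A Q] [Module R Q] [IsScalarTower A R Q]
    {f : X →ₗ[A] Y} {g : Y →ₗ[A] Z} (h : Exact (lcomp A Q g) (lcomp A Q f)) :
    Exact (lcomp R Q (g.baseChange R)) (lcomp R Q (f.baseChange R)) := by
  refine Exact.of_ladder_addEquiv_of_exact (f₁₂ := (lcomp A Q g).toAddMonoidHom)
    (f₂₃ := (lcomp A Q f).toAddMonoidHom) (g₁₂ := (lcomp R Q (g.baseChange R)).toAddMonoidHom)
    (g₂₃ := (lcomp R Q (f.baseChange R)).toAddMonoidHom) (liftBaseChangeEquiv R).toAddEquiv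
    (liftBaseChangeEquiv R).toAddEquiv (liftBaseChangeEquiv R).toAddEquiv ?_ ?_ h <;>
  · ext φ : 1
    exact TensorProduct.AlgebraTensorModule.ext fun r x => rfl

lemma exists_baseChange_range_linearEquiv {X Y Z : Type u} [AddCommGroup X] [Module A X]
    [AddCommGroup Y] [Module A Y] [AddCommGroup Z] [Module A Z]
    (f : Y →ₗ[A] X) (g : Z →ₗ[A] Y) (hfg : f ∘ₗ g = 0)
    (h : Exact (g.baseChange R) (f.baseChange R)) :
    Nonempty (R ⊗[A] range f ≃ₗ[R] range (f.baseChange R)) := by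
  have hf : (range f).subtype ∘ₗ f.rangeRestrict = f := subtype_comp_codRestrict _ _ _
  have hfR : ((range f).subtype.baseChange R) ∘ₗ (f.rangeRestrict.baseChange R) =
      f.baseChange R := by rw [← baseChange_comp, hf]
  have hπg : f.rangeRestrict ∘ₗ g = 0 := by
    ext z
    exact congr($hfg z)
  have hsurj := baseChange_surjective R f.surjective_rangeRestrict
  have hinj : Injective ((range f).subtype.baseChange R) := by
    rw [← ker_eq_bot, ker_eq_bot']
    intro x hx
    obtain ⟨y, rfl⟩ := hsurj x
    obtain ⟨w, rfl⟩ := (h y).mp (by rwa [← hfR])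
    rw [← LinearMap.comp_apply, ← baseChange_comp, hπg, baseChange_zero, LinearMap.zero_apply]
  have hrange : range ((range f).subtype.baseChange R) = range (f.baseChange R) := by
    rw [← hfR, range_comp_of_range_eq_top _ (range_eq_top.mpr hsurj)]
  exact ⟨(LinearEquiv.ofInjective _ hinj).trans (LinearEquiv.ofEq _ _ hrange)⟩

end BaseChange

section GorensteinBaseChange

open LinearMap

variable {A : Type u} [CommRing A] {R : Type u} [CommRing R] [Algebra A R]
  {P : ℤ → ModuleCat.{u} A} {d : ∀ i : ℤ, P (i + 1) ⟶ P i}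

/-- A projective `R`-module is a retract of a free `R`-module, which has finite projective
dimension over `A` because `R` does. -/
lemma IsCompleteProjectiveResolution.isTensorHomExact_of_projective_of_hasLeftResLE
    (hP : IsCompleteProjectiveResolution P d) {n : ℕ}
    (hR : HasLeftResLE A (fun G => Module.Projective A G) R n)
    (Q : Type u) [AddCommGroup Q] [Module R Q] [Module A Q] [IsScalarTower A R Q]
    [Module.Projective R Q] : IsTensorHomExact P d Q := by
  classical
  obtain ⟨s, hs⟩ := Module.projective_def'.mp ‹Module.Projective R Q›
  have hfree : IsTensorHomExact P d (Q →₀ R) :=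
    (hP.isTensorHomExact_of_hasLeftResLE (hR.dfinsupp_projective Q)).of_linearEquiv
      (finsuppLequivDFinsupp A).symm
  exact hfree.of_retract (s.restrictScalars A) ((Finsupp.linearCombination R id).restrictScalars A)
    (by ext x; exact congr($hs x))

lemma IsCompleteProjectiveResolution.baseChange (hP : IsCompleteProjectiveResolution P d)
    {n : ℕ} (hR : HasLeftResLE A (fun G => Module.Projective A G) R n) :
    IsCompleteProjectiveResolution (fun i => ModuleCat.of R (R ⊗[A] P i))
      (fun i => ModuleCat.ofHom ((d i).hom.baseChange R)) where
  projective i := have := hP.projective i; inferInstance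
  exact i := by
    simpa only [ModuleCat.hom_ofHom, baseChange_eq_ltensor] using
      (hP.isTensorHomExact_of_hasLeftResLE hR).1 i
  exact_lcomp Q _ i := by
    let : Module A Q := Module.compHom Q (algebraMap A R)
    have : IsScalarTower A R Q := IsScalarTower.of_algebraMap_smul fun _ _ => rfl
    exact ((hP.isTensorHomExact_of_projective_of_hasLeftResLE hR Q).2 i).lcomp_baseChange R

theorem IsGorensteinProjective.baseChange {M : Type u} [AddCommGroup M] [Module A M]
    (hR : projDim A R ≠ ⊤) (hM : IsGorensteinProjective A M) :
    IsGorensteinProjective R (R ⊗[A] M) := by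
  obtain ⟨P, d, hproj, hexact, hhom, ⟨e⟩⟩ := hM
  have hP : IsCompleteProjectiveResolution P d := ⟨hproj, hexact, hhom⟩
  obtain ⟨n, hRn⟩ := exists_hasLeftResLE_of_projDim_ne_top hR
  have hP' := hP.baseChange hRn
  obtain ⟨e'⟩ :=
    exists_baseChange_range_linearEquiv R _ _ (hexact 0).linearMap_comp_eq_zero (hP'.exact 0)
  exact ⟨_, _, hP'.projective, hP'.exact, hP'.exact_lcomp, ⟨(e.baseChange A R _ _).trans e'⟩⟩

end GorensteinBaseChange

theorem stmt12 (R E : Type u) [CommRing R] [AddCommGroup E] [Module R E]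
    [Module Rᵐᵒᵖ E] [IsCentralScalar R E]
    (M : Type u) [AddCommGroup M] [Module (TrivSqZeroExt R E) M] :
    letI : Module (TrivSqZeroExt R E) R := Module.compHom R (paperEps R E)
    letI : Algebra (TrivSqZeroExt R E) R := (paperEps R E).toAlgebra
    projDim (TrivSqZeroExt R E) R ≠ ⊤ →
    IsGorensteinProjective (TrivSqZeroExt R E) M →
    IsGorensteinProjective R (TensorProduct (TrivSqZeroExt R E) R M) :=

  letI := (paperEps R E).toAlgebra
  fun hR hM => hM.baseChange hR
end
end

section
/- Let R be a commutative ring and E a flat R-module such that fd_{R⋉E}(R) = n < ∞. Then for every injective R-module I (viewed as an R⋉E-module via ε), id_{R⋉E}(I) ≤ n. -/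
open CategoryTheory TrivSqZeroExt

noncomputable section

universe u

open TensorProduct

/-- restriction of scalars along `inl : R → R⋉E` -/
def rsmul (R E : Type u) [CommRing R] [AddCommGroup E] [Module R E]
    [Module Rᵐᵒᵖ E] [IsCentralScalar R E]
    (M : Type u) [AddCommGroup M] [Module (TrivSqZeroExt R E) M] : Module R M :=
  Module.compHom M (TrivSqZeroExt.inlHom R E)

section Core

variable (R E : Type u) [CommRing R] [AddCommGroup E] [Module R E]
    [Module Rᵐᵒᵖ E] [IsCentralScalar R E]

local notation "𝔸" => TrivSqZeroExt R E

example (M : Type u) [AddCommGroup M] [Module 𝔸 M] (r : R) (x : M) :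
    (rsmul R E M).toSMul.smul r x = (inl r : 𝔸) • x := rfl

/-- an `𝔸`-linear map is `R`-linear for the `rsmul` structures -/
def toRLin {M N : Type u} [AddCommGroup M] [AddCommGroup N]
    [Module 𝔸 M] [Module 𝔸 N] (f : M →ₗ[𝔸] N) :
    @LinearMap R R _ _ (RingHom.id R) M N _ _ (rsmul R E M) (rsmul R E N) :=
  letI := rsmul R E M
  letI := rsmul R E N
  { toFun := f
    map_add' := f.map_add
    map_smul' := fun r x => f.map_smul (inl r : 𝔸) x }

@[simp] lemma toRLin_apply {M N : Type u} [AddCommGroup M] [AddCommGroup N]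
    [Module 𝔸 M] [Module 𝔸 N] (f : M →ₗ[𝔸] N) (x : M) : toRLin R E f x = f x := rfl

variable (I : Type u) [AddCommGroup I] [Module R I]

abbrev HH (M : Type u) [AddCommGroup M] [Module 𝔸 M] : Type u :=
  @LinearMap R R _ _ (RingHom.id R) M I _ _ (rsmul R E M) _

/-- the `𝔸`-action on `HH I M` by precomposition -/
def hsmulFun (M : Type u) [AddCommGroup M] [Module 𝔸 M] (a : 𝔸) (f : HH R E I M) :
    HH R E I M :=
  letI := rsmul R E M
  { toFun := fun x => f (a • x)
    map_add' := fun x y => by rw [smul_add, map_add]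
    map_smul' := fun r x => by
      show f (a • ((inl r : 𝔸) • x)) = r • f (a • x)
      rw [smul_smul, mul_comm, ← smul_smul]
      exact f.map_smul r (a • x) }

instance hmodule (M : Type u) [AddCommGroup M] [Module 𝔸 M] : Module 𝔸 (HH R E I M) where
  smul a f := hsmulFun R E I M a f
  one_smul f := by
    letI := rsmul R E M
    refine LinearMap.ext fun x => ?_
    show f ((1 : 𝔸) • x) = f x
    rw [one_smul]
  mul_smul a b f := by
    letI := rsmul R E M
    refine LinearMap.ext fun x => ?_
    show f ((a * b) • x) = f (b • a • x)
    rw [mul_comm, mul_smul]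
  smul_zero a := rfl
  smul_add a f g := rfl
  add_smul a b f := by
    letI := rsmul R E M
    refine LinearMap.ext fun x => ?_
    show f ((a + b) • x) = f (a • x) + f (b • x)
    rw [add_smul, map_add]
  zero_smul f := by
    letI := rsmul R E M
    refine LinearMap.ext fun x => ?_
    show f ((0 : 𝔸) • x) = 0
    rw [zero_smul, map_zero]

@[simp] lemma hsmul_apply (M : Type u) [AddCommGroup M] [Module 𝔸 M] (a : 𝔸) (f : HH R E I M)
    (x : M) : (a • f) x = f (a • x) := rfl


theorem HH_injective (hI : Module.Injective R I) (M : Type u) [AddCommGroup M] [Module 𝔸 M]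
    [Module.Flat 𝔸 M] : Module.Injective 𝔸 (HH R E I M) := by
  constructor
  intro X Y _ _ _ _ f hf g
  letI instM : Module R M := rsmul R E M
  letI instTX : Module R (X ⊗[𝔸] M) := rsmul R E (X ⊗[𝔸] M)
  letI instTY : Module R (Y ⊗[𝔸] M) := rsmul R E (Y ⊗[𝔸] M)
  -- the pairing X → M → I
  let b : X →+ M →+ I :=
    { toFun := fun x => (g x).toAddMonoidHom
      map_zero' := by ext v; show g 0 v = 0; rw [g.map_zero]; rfl
      map_add' := fun x y => by
        ext v; show g (x + y) v = g x v + g y v; rw [g.map_add]; rfl }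
  have hbt : ∀ (x : X) (v : M), b x v = g x v := fun _ _ => rfl
  have hbal : ∀ (a : 𝔸) (x : X) (v : M), b (a • x) v = b x (a • v) := by
    intro a x v
    rw [hbt, hbt, g.map_smul]
    rfl
  let g0 : X ⊗[𝔸] M →+ I := TensorProduct.liftAddHom b hbal
  have hg0t : ∀ (x : X) (v : M), g0 (x ⊗ₜ v) = g x v := fun x v =>
    TensorProduct.liftAddHom_tmul b hbal x v
  have hg0s : ∀ (r : R) (t : X ⊗[𝔸] M), g0 ((inl r : 𝔸) • t) = r • g0 t := by
    intro r t
    induction t using TensorProduct.induction_on with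
    | zero => rw [smul_zero, map_zero, smul_zero]
    | tmul x v =>
        rw [TensorProduct.smul_tmul', hg0t, hg0t, g.map_smul]
        exact (g x).map_smul r v
    | add s t hs ht => rw [smul_add, map_add, map_add, hs, ht, smul_add]
  let gR : @LinearMap R R _ _ (RingHom.id R) (X ⊗[𝔸] M) I _ _ instTX _ :=
    { toFun := g0
      map_add' := g0.map_add
      map_smul' := fun r t => hg0s r t }
  have hgRt : ∀ (x : X) (v : M), gR (x ⊗ₜ v) = g x v := hg0t
  -- tensored injection
  have hfTinj : Function.Injective (f.rTensor M) :=
    Module.Flat.rTensor_preserves_injective_linearMap f hf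
  obtain ⟨h0, hh0⟩ := hI.out (toRLin R E (f.rTensor M)) hfTinj gR
  refine ⟨?_, ?_⟩
  · exact
      { toFun := fun y =>
          { toFun := fun v => h0 (y ⊗ₜ v)
            map_add' := fun v w => by rw [TensorProduct.tmul_add, map_add]
            map_smul' := fun r v => by
              show h0 (y ⊗ₜ ((inl r : 𝔸) • v)) = r • h0 (y ⊗ₜ v)
              rw [← TensorProduct.smul_tmul]
              exact h0.map_smul r (y ⊗ₜ v) }
        map_add' := fun y y' => by
          refine LinearMap.ext fun v => ?_
          show h0 ((y + y') ⊗ₜ v) = h0 (y ⊗ₜ v) + h0 (y' ⊗ₜ v)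
          rw [TensorProduct.add_tmul, map_add]
        map_smul' := fun a y => by
          refine LinearMap.ext fun v => ?_
          show h0 ((a • y) ⊗ₜ v) = h0 (y ⊗ₜ (a • v))
          rw [TensorProduct.smul_tmul] }
  · intro x
    refine LinearMap.ext fun v => ?_
    show h0 (f x ⊗ₜ v) = g x v
    have h1 : (f x) ⊗ₜ[𝔸] v = toRLin R E (f.rTensor M) (x ⊗ₜ v) := by
      rw [toRLin_apply, LinearMap.rTensor_tmul]
    rw [h1, hh0, hgRt]


/-- precomposition, as an `𝔸`-linear map on `HH`s -/
def precompLin {M N : Type u} [AddCommGroup M] [AddCommGroup N] [Module 𝔸 M] [Module 𝔸 N]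
    (f : M →ₗ[𝔸] N) : HH R E I N →ₗ[𝔸] HH R E I M where
  toFun ψ := ψ.comp (toRLin R E f)
  map_add' ψ φ := by
    letI := rsmul R E M
    exact LinearMap.ext fun x => rfl
  map_smul' a ψ := by
    letI := rsmul R E M
    refine LinearMap.ext fun x => ?_
    show ψ (a • f x) = ψ (f (a • x))
    rw [f.map_smul]

@[simp] lemma precompLin_apply {M N : Type u} [AddCommGroup M] [AddCommGroup N]
    [Module 𝔸 M] [Module 𝔸 N] (f : M →ₗ[𝔸] N) (ψ : HH R E I N) (x : M) :
    precompLin R E I f ψ x = ψ (f x) := rfl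

lemma HH_subsingleton (M : Type u) [AddCommGroup M] [Module 𝔸 M] [Subsingleton M] :
    Subsingleton (HH R E I M) := by
  letI := rsmul R E M
  exact ⟨fun f g => LinearMap.ext fun x => by
    rw [Subsingleton.elim x 0, map_zero, map_zero]⟩


/-- the augmentation `I → HH I M₀` induced by `aug : M₀ → R`. -/
def augHom (M₀ : Type u) [AddCommGroup M₀] [Module 𝔸 M₀]
    (aug : @LinearMap 𝔸 𝔸 _ _ (RingHom.id 𝔸) M₀ R _ _ _ (Module.compHom R (paperEps R E))) :
    @LinearMap 𝔸 𝔸 _ _ (RingHom.id 𝔸) I (HH R E I M₀) _ _ (Module.compHom I (paperEps R E)) _ :=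
  letI instAR : Module 𝔸 R := Module.compHom R (paperEps R E)
  letI instAI : Module 𝔸 I := Module.compHom I (paperEps R E)
  letI := rsmul R E M₀
  { toFun := fun m =>
      { toFun := fun x => aug x • m
        map_add' := fun x y => by rw [aug.map_add, add_smul]
        map_smul' := fun r x => by
          rw [show ((r : R) • x : M₀) = ((inl r : 𝔸) • x : M₀) from rfl,
            aug.map_smul]
          show (TrivSqZeroExt.fst ((inl r : 𝔸)) * aug x) • m = r • (aug x • m)
          rw [fst_inl, mul_smul] }
    map_add' := fun m m' => by
      refine LinearMap.ext fun x => ?_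
      show aug x • (m + m') = aug x • m + aug x • m'
      rw [smul_add]
    map_smul' := fun a m => by
      refine LinearMap.ext fun x => ?_
      show aug x • (a • m) = aug (a • x) • m
      rw [aug.map_smul]
      show aug x • (TrivSqZeroExt.fst a • m) = (TrivSqZeroExt.fst a * aug x) • m
      rw [mul_comm, mul_smul] }

@[simp] lemma augHom_apply (M₀ : Type u) [AddCommGroup M₀] [Module 𝔸 M₀]
    (aug : @LinearMap 𝔸 𝔸 _ _ (RingHom.id 𝔸) M₀ R _ _ _ (Module.compHom R (paperEps R E)))
    (m : I) (x : M₀) : augHom R E I M₀ aug m x = aug x • m := rfl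

theorem key (hI : Module.Injective R I) (n : ℕ)
    (hres : letI : Module 𝔸 R := Module.compHom R (paperEps R E)
      HasLeftResLE 𝔸 (fun N => Module.Flat 𝔸 N) R n) :
    letI : Module 𝔸 I := Module.compHom I (paperEps R E)
    HasRightResLE 𝔸 (fun N => Module.Injective 𝔸 N) I n := by
  letI instAR : Module 𝔸 R := Module.compHom R (paperEps R E)
  letI instAI : Module 𝔸 I := Module.compHom I (paperEps R E)
  obtain ⟨G, d, aug0, hP, hzero, hsurj0, hex00, hex⟩ := hres
  -- retype the augmentation with plain `R` codomain
  let aug : @LinearMap 𝔸 𝔸 _ _ (RingHom.id 𝔸) ↥(G 0) R _ _ _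
      (Module.compHom R (paperEps R E)) := aug0.hom
  have hsurj : Function.Surjective aug := hsurj0
  have hex0 : Function.Exact (d 0) aug := hex00
  obtain ⟨x₁, hx₁⟩ := hsurj (1 : R)
  -- the five properties, stated with clean types
  have hinjobj : ∀ i, Module.Injective 𝔸 (HH R E I (G i)) := by
    intro i
    haveI : Module.Flat 𝔸 ↥(G i) := hP i
    exact HH_injective R E I hI (G i)
  have hsub : ∀ i, n < i → Subsingleton (HH R E I (G i)) := by
    intro i hi
    haveI : Subsingleton ↥(G i) := hzero i hi
    exact HH_subsingleton R E I (G i)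
  have hauginj : Function.Injective (augHom R E I ↥(G 0) aug) := by
    intro m m' h
    have h1 : aug x₁ • m = aug x₁ • m' := DFunLike.congr_fun h x₁
    rwa [hx₁, one_smul, one_smul] at h1
  have hexzero : Function.Exact (⇑(augHom R E I ↥(G 0) aug))
      (⇑(precompLin R E I (d 0).hom)) := by
    intro ψ
    constructor
    · intro hψ
      have hψ' : ∀ y, ψ (d 0 y) = 0 := fun y => DFunLike.congr_fun hψ y
      refine ⟨ψ x₁, ?_⟩
      letI := rsmul R E ↥(G 0)
      refine LinearMap.ext fun x => ?_
      show aug x • ψ x₁ = ψ x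
      have hker : aug (x - (inl (aug x) : 𝔸) • x₁) = 0 := by
        rw [map_sub, aug.map_smul]
        show aug x - TrivSqZeroExt.fst ((inl (aug x) : 𝔸)) * aug x₁ = 0
        rw [fst_inl, hx₁, mul_one, sub_self]
      obtain ⟨y, hy⟩ := (hex0 _).mp hker
      have h2 : ψ (x - (inl (aug x) : 𝔸) • x₁) = 0 := by rw [← hy]; exact hψ' y
      rw [map_sub] at h2
      have h3 : ψ ((inl (aug x) : 𝔸) • x₁) = aug x • ψ x₁ := ψ.map_smul (aug x) x₁
      rw [h3, sub_eq_zero] at h2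
      exact h2.symm
    · rintro ⟨m, rfl⟩
      letI := rsmul R E ↥(G 1)
      refine LinearMap.ext fun y => ?_
      show aug (d 0 y) • m = 0
      rw [(hex0 (d 0 y)).mpr ⟨y, rfl⟩, zero_smul]
  have hmid : ∀ i, Function.Exact (⇑(precompLin R E I (d i).hom))
      (⇑(precompLin R E I (d (i + 1)).hom)) := by
    intro i ψ
    constructor
    · intro hψ
      have hψ' : ∀ y, ψ (d (i + 1) y) = 0 := fun y => DFunLike.congr_fun hψ y
      letI inst1 := rsmul R E ↥(G (i + 1))
      letI inst0 := rsmul R E ↥(G i)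
      set vR := toRLin R E (d i).hom with hvR
      have hle : LinearMap.ker vR ≤ LinearMap.ker ψ := by
        intro x hx
        have hx' : d i x = 0 := hx
        obtain ⟨y, hy⟩ := (hex i x).mp hx'
        show ψ x = 0
        rw [← hy]
        exact hψ' y
      set ψbar := Submodule.liftQ (LinearMap.ker vR) ψ hle with hψbar
      set e := vR.quotKerEquivRange with he
      set χ₀ := ψbar.comp (e.symm : LinearMap.range vR →ₗ[R] _) with hχ₀
      obtain ⟨χ, hχ⟩ := hI.out (LinearMap.range vR).subtype
        (Submodule.injective_subtype _) χ₀
      refine ⟨χ, ?_⟩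
      refine LinearMap.ext fun x => ?_
      show χ (d i x) = ψ x
      have h1 : χ (d i x) = χ ((LinearMap.range vR).subtype
          ⟨vR x, LinearMap.mem_range_self vR x⟩) := rfl
      rw [h1, hχ]
      show ψbar (e.symm ⟨vR x, LinearMap.mem_range_self vR x⟩) = ψ x
      have h2 : e.symm ⟨vR x, LinearMap.mem_range_self vR x⟩ =
          Submodule.Quotient.mk x := by
        rw [LinearEquiv.symm_apply_eq]
        exact Subtype.ext (vR.quotKerEquivRange_apply_mk x).symm
      rw [h2]
      exact Submodule.liftQ_apply _ ψ x
    · rintro ⟨φ, rfl⟩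
      letI := rsmul R E ↥(G (i + 1 + 1))
      refine LinearMap.ext fun y => ?_
      show φ (d i (d (i + 1) y)) = 0
      rw [(hex i (d (i + 1) y)).mpr ⟨y, rfl⟩, map_zero]
  exact ⟨fun i => ModuleCat.of 𝔸 (HH R E I (G i)),
    fun i => ModuleCat.ofHom (precompLin R E I (d i).hom),
    ModuleCat.ofHom (augHom R E I ↥(G 0) aug),
    hinjobj, hsub, hauginj, hexzero, hmid⟩

end Core

theorem exists_res {R : Type u} [CommRing R] {M : Type u} [AddCommGroup M] [Module R M]
    {P : ModuleCat.{u} R → Prop} {n : ℕ}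
    (h : sInf ((fun k : ℕ => (k : ℕ∞)) '' {k : ℕ | HasLeftResLE R P M k}) = (n : ℕ∞)) :
    HasLeftResLE R P M n := by
  have hne : ((fun k : ℕ => (k : ℕ∞)) '' {k : ℕ | HasLeftResLE R P M k}).Nonempty := by
    by_contra hc
    rw [Set.not_nonempty_iff_eq_empty] at hc
    rw [hc, sInf_empty] at h
    exact (ENat.coe_ne_top n) h.symm
  have hmem := csInf_mem hne
  rw [h] at hmem
  obtain ⟨m, hm, hmn⟩ := hmem
  have hmeq : m = n := Nat.cast_inj.mp hmn
  rwa [hmeq] at hm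


theorem stmt19 (R E : Type u) [CommRing R] [AddCommGroup E] [Module R E]
    [Module Rᵐᵒᵖ E] [IsCentralScalar R E] [Module.Flat R E] (n : ℕ) :
    letI : Module (TrivSqZeroExt R E) R := Module.compHom R (paperEps R E)
    flatDim (TrivSqZeroExt R E) R = (n : ℕ∞) →
    ∀ (I : Type u) (_ : AddCommGroup I) (_ : Module R I), Module.Injective R I →
      @injDim (TrivSqZeroExt R E) _ I _ (Module.compHom I (paperEps R E)) ≤ (n : ℕ∞) := by
  intro hflat I inst1 inst2 hI
  have hres := @exists_res (TrivSqZeroExt R E) _ R _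
    (Module.compHom R (paperEps R E)) (fun N => Module.Flat (TrivSqZeroExt R E) N) n hflat
  have hkey := key R E I hI n hres
  exact sInf_le ⟨n, hkey, rfl⟩
end
end
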